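/- arXiv:1910.09197 — 2 statements merged into one kernel-verified Lean document; each statement's English description precedes it below -/
import Mathlib

section
/- Let b_1, ..., b_N be positive real numbers and let zeta > 0 be such that sum_{k=1}^N b_n/(b_k * zeta) > 1 for every n. Define t_n* = (1/b_n) * ln( sum_{k=1}^N b_n/(b_k * zeta) ). Then (i) sum_{n=1}^N exp(-b_n * t_n*) = zeta, i.e., the constraint is active at t*, and (ii) for every vector t = (t_1, ..., t_N) of real numbers satisfying sum_{n=1}^N exp(-b_n * t_n) <= zeta, one has sum_{n=1}^N t_n >= sum_{n=1}^N t_n*. Hence t* is the global minimizer of sum_n t_n subject to sum_n exp(-b_n t_n) <= zeta. -/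
/-!
The constraint function `t ↦ ∑ n, exp (-(b n * t n))` is convex, so it lies above its tangent
plane at `t*`. At `t*` every term equals `ζ / (b n * ∑ k, (b k)⁻¹)`, hence its gradient is the
constant vector `-(ζ / ∑ k, (b k)⁻¹)`, which is the Lagrange condition: the tangent plane
inequality then says that lowering `∑ n, t n` below `∑ n, t* n` violates the constraint.
-/

open Real Finset

theorem exp_neg_mul_tangent_le (a x y : ℝ) :
    exp (-(a * x)) * (1 - a * (y - x)) ≤ exp (-(a * y)) :=
  calc exp (-(a * x)) * (1 - a * (y - x))
      ≤ exp (-(a * x)) * exp (-(a * (y - x))) := by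
        gcongr
        linarith [add_one_le_exp (-(a * (y - x)))]
    _ = exp (-(a * y)) := by rw [← exp_add]; ring_nf

/-- Sufficiency of the Lagrange condition for `min ∑ t n` subject to `∑ exp (-(b n * t n)) ≤ const`. -/
theorem sum_le_sum_of_sum_exp_neg_mul_le {ι : Type*} (s : Finset ι) {b t' : ι → ℝ} {c : ℝ}
    (hc : 0 < c) (hgrad : ∀ n ∈ s, b n * exp (-(b n * t' n)) = c) {t : ι → ℝ}
    (ht : ∑ n ∈ s, exp (-(b n * t n)) ≤ ∑ n ∈ s, exp (-(b n * t' n))) :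
    ∑ n ∈ s, t' n ≤ ∑ n ∈ s, t n := by
  have tangent : ∀ n ∈ s, exp (-(b n * t' n)) - c * (t n - t' n) ≤ exp (-(b n * t n)) := by
    intro n hn
    rw [← hgrad n hn]
    linarith [exp_neg_mul_tangent_le (b n) (t' n) (t n)]
  have hsum := sum_le_sum tangent
  rw [sum_sub_distrib, ← mul_sum, sum_sub_distrib] at hsum
  nlinarith

theorem exp_neg_mul_one_div_mul_log {a c : ℝ} (ha : a ≠ 0) (hc : 0 < c) :
    exp (-(a * ((1 / a) * log c))) = c⁻¹ := by
  rw [← mul_assoc, mul_one_div_cancel ha, one_mul, exp_neg, exp_log hc]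

theorem sum_div_mul_eq_mul_sum_inv_div {ι : Type*} (s : Finset ι) (b : ι → ℝ) (x ζ : ℝ) :
    ∑ k ∈ s, x / (b k * ζ) = x * (∑ k ∈ s, (b k)⁻¹) / ζ := by
  rw [mul_sum, sum_div]
  exact sum_congr rfl fun k _ => by ring

theorem sum_div_mul_sum_inv {ι : Type*} (s : Finset ι) (b : ι → ℝ) (ζ : ℝ)
    (hS : ∑ k ∈ s, (b k)⁻¹ ≠ 0) :
    ∑ n ∈ s, ζ / (b n * ∑ k ∈ s, (b k)⁻¹) = ζ := by
  calc ∑ n ∈ s, ζ / (b n * ∑ k ∈ s, (b k)⁻¹)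
      = (∑ n ∈ s, (b n)⁻¹) * (ζ / ∑ k ∈ s, (b k)⁻¹) := by
        rw [sum_mul]; exact sum_congr rfl fun n _ => by ring
    _ = ζ := mul_div_cancel₀ ζ hS

theorem secrecy_power_allocation_optimal_general
    (N : ℕ) (hN : 0 < N) (b : Fin N → ℝ) (hb : ∀ n, 0 < b n)
    (ζ : ℝ) (hζ : 0 < ζ)
    (tstar : Fin N → ℝ)
    (htstar : ∀ n, tstar n = (1 / b n) * Real.log (∑ k, b n / (b k * ζ))) :
    (∑ n, Real.exp (-(b n * tstar n))) = ζ ∧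
    (∀ t : Fin N → ℝ, (∑ n, Real.exp (-(b n * t n))) ≤ ζ →
      ∑ n, tstar n ≤ ∑ n, t n) := by
  set S := ∑ k, (b k)⁻¹
  have hS : 0 < S := sum_pos (fun k _ => inv_pos.2 (hb k)) ⟨⟨0, hN⟩, mem_univ _⟩
  have hexp : ∀ n, exp (-(b n * tstar n)) = ζ / (b n * S) := fun n => by
    have hbn := hb n
    rw [htstar, sum_div_mul_eq_mul_sum_inv_div,
      exp_neg_mul_one_div_mul_log hbn.ne' (by positivity), inv_div]
  have hactive : ∑ n, exp (-(b n * tstar n)) = ζ := by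
    simp_rw [hexp]; exact sum_div_mul_sum_inv _ b ζ hS.ne'
  refine ⟨hactive, fun t ht => sum_le_sum_of_sum_exp_neg_mul_le univ (c := ζ / S)
    (by positivity) (fun n _ => ?_) (hactive ▸ ht)⟩
  rw [hexp, mul_div_assoc', mul_div_mul_left _ _ (hb n).ne']

/-- Power allocation subproblem of the secrecy optimization:
`t* n = (1/b n) * ln (∑ k, b n / (b k ζ))` is the unique active point at which the
constraint `∑ n, exp (-(b n t n)) ≤ ζ` is met with equality, and it globally minimizes
`∑ n, t n` over all real vectors satisfying the constraint. -/
theorem secrecy_power_allocation_optimal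
    (N : ℕ) (hN : 0 < N) (b : Fin N → ℝ) (hb : ∀ n, 0 < b n)
    (ζ : ℝ) (hζ : 0 < ζ)
    (hfeas : ∀ n, 1 < ∑ k, b n / (b k * ζ))
    (tstar : Fin N → ℝ)
    (htstar : ∀ n, tstar n = (1 / b n) * Real.log (∑ k, b n / (b k * ζ))) :
    (∑ n, Real.exp (-(b n * tstar n))) = ζ ∧
    (∀ t : Fin N → ℝ, (∑ n, Real.exp (-(b n * t n))) ≤ ζ →
      ∑ n, tstar n ≤ ∑ n, t n) :=
  secrecy_power_allocation_optimal_general N hN b hb ζ hζ tstar htstar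
end

section
/- Let A > 0 and gamma > 0 be real numbers, and define f(R) = R * exp( -A * ((gamma + 1) * 2^R - 1) / gamma ) for R > 0. Then there exists a unique R* > 0 satisfying (A * (gamma + 1) / gamma) * ln(2) * 2^{R*} * R* = 1; moreover f is strictly increasing on (0, R*] and strictly decreasing on [R*, infinity). In particular, f is quasi-concave on (0, infinity) and R* is its unique global maximizer (R* equals (1/ln 2) * W_0( gamma / (A * (gamma + 1)) ), where W_0 is the principal branch of the Lambert W function). -/
/-!
With `a = A (γ + 1) / γ`, the objective is `R ↦ R · exp (-(a · 2^R - A / γ))`, whose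
derivative is `exp (…) · (1 - g R)` for `g R = a · log 2 · 2^R · R`. On `[0, ∞)` the function
`g` increases strictly from `0` without bound, so it takes the value `1` at exactly one point
`R*`, and the derivative is positive before `R*` and negative after it. Writing
`2^R = exp (log 2 · R)` turns `g R* = 1` into the Lambert equation
`(log 2 · R*) exp (log 2 · R*) = 1 / a`.
-/

open Real Set

section Objective

variable {a b d c x₀ : ℝ}

theorem hasDerivAt_mul_exp_neg_rpow (hb : 0 < b) (x : ℝ) :
    HasDerivAt (fun x => x * exp (-(a * b ^ x - d)))
      (exp (-(a * b ^ x - d)) * (1 - a * log b * b ^ x * x)) x := by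
  have hexp : HasDerivAt (fun x => exp (-(a * b ^ x - d)))
      (exp (-(a * b ^ x - d)) * -(a * (log b * 1 * b ^ x))) x :=
    ((((hasDerivAt_id x).const_rpow hb).const_mul a).sub_const d).neg.exp
  exact ((hasDerivAt_id' x).mul hexp).congr_deriv (by ring)

theorem strictMonoOn_mul_rpow_mul (hc : 0 < c) (hb : 1 < b) :
    StrictMonoOn (fun x => c * b ^ x * x) (Ici 0) := by
  intro x hx y _ hxy
  have hbxy : b ^ x < b ^ y := rpow_lt_rpow_of_exponent_lt hb hxy
  have hx : (0 : ℝ) ≤ x := hx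
  calc c * b ^ x * x ≤ c * b ^ y * x := by gcongr
    _ < c * b ^ y * y := by gcongr

theorem exists_pos_mul_rpow_mul_eq_one (hc : 0 < c) (hb : 1 < b) :
    ∃ x, 0 < x ∧ c * b ^ x * x = 1 := by
  have hcont : Continuous fun x => c * b ^ x * x := by
    have := continuous_const_rpow (a := b) (by linarith)
    fun_prop
  have hmem : (1 : ℝ) ∈ Icc (c * b ^ (0 : ℝ) * 0) (c * b ^ c⁻¹ * c⁻¹) := by
    refine ⟨by simp, ?_⟩
    rw [mul_right_comm, mul_inv_cancel₀ hc.ne', one_mul]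
    exact one_le_rpow hb.le (inv_nonneg.mpr hc.le)
  obtain ⟨x, hx, hx1⟩ := intermediate_value_Icc (inv_nonneg.mpr hc.le) hcont.continuousOn hmem
  refine ⟨x, lt_of_le_of_ne hx.1 ?_, hx1⟩
  rintro rfl
  simp at hx1

theorem strictMonoOn_mul_exp_neg_rpow (ha : 0 < a) (hb : 1 < b)
    (hx₀ : a * log b * b ^ x₀ * x₀ = 1) :
    StrictMonoOn (fun x => x * exp (-(a * b ^ x - d))) (Ioc 0 x₀) := by
  have hg := strictMonoOn_mul_rpow_mul (mul_pos ha (log_pos hb)) hb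
  refine strictMonoOn_of_hasDerivWithinAt_pos (convex_Ioc 0 x₀)
    (fun x _ => (hasDerivAt_mul_exp_neg_rpow (by linarith) x).continuousAt.continuousWithinAt)
    (fun x _ => (hasDerivAt_mul_exp_neg_rpow (by linarith) x).hasDerivWithinAt) ?_
  rw [interior_Ioc]
  intro x hx
  have : a * log b * b ^ x * x < 1 := hx₀ ▸ hg hx.1.le (hx.1.trans hx.2).le hx.2
  exact mul_pos (exp_pos _) (by linarith)

theorem strictAntiOn_mul_exp_neg_rpow (ha : 0 < a) (hb : 1 < b) (hx₀pos : 0 < x₀)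
    (hx₀ : a * log b * b ^ x₀ * x₀ = 1) :
    StrictAntiOn (fun x => x * exp (-(a * b ^ x - d))) (Ici x₀) := by
  have hg := strictMonoOn_mul_rpow_mul (mul_pos ha (log_pos hb)) hb
  refine strictAntiOn_of_hasDerivWithinAt_neg (convex_Ici x₀)
    (fun x _ => (hasDerivAt_mul_exp_neg_rpow (by linarith) x).continuousAt.continuousWithinAt)
    (fun x _ => (hasDerivAt_mul_exp_neg_rpow (by linarith) x).hasDerivWithinAt) ?_
  rw [interior_Ici]
  intro x hx
  have : 1 < a * log b * b ^ x * x := hx₀ ▸ hg hx₀pos.le (hx₀pos.trans hx).le hx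
  exact mul_neg_of_pos_of_neg (exp_pos _) (by linarith)

theorem log_mul_mul_exp_eq_inv (hb : 0 < b) (hx₀ : a * log b * b ^ x₀ * x₀ = 1) :
    log b * x₀ * exp (log b * x₀) = a⁻¹ := by
  rw [rpow_def_of_pos hb] at hx₀
  exact eq_inv_of_mul_eq_one_right (by linear_combination hx₀)

end Objective

theorem lt_of_strictMonoOn_Ioc_of_strictAntiOn_Ici {α β : Type*} [LinearOrder α] [Preorder β]
    {f : α → β} {a x₀ x : α} (hmono : StrictMonoOn f (Ioc a x₀))
    (hanti : StrictAntiOn f (Ici x₀))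
    (hx : a < x) (hx₀ : a < x₀) (hne : x ≠ x₀) : f x < f x₀ := by
  rcases hne.lt_or_gt with h | h
  · exact hmono ⟨hx, h.le⟩ ⟨hx₀, le_rfl⟩ h
  · exact hanti le_rfl h.le h

/-- Proposition 1 of the paper: for `A > 0`, `γ > 0`, the secrecy-throughput objective
`f(R) = R * exp (-A ((γ+1) 2^R - 1) / γ)` has a unique stationary point `R* > 0`
characterized by `(A (γ+1)/γ) ln 2 · 2^{R*} · R* = 1`; `f` is strictly increasing on
`(0, R*]`, strictly decreasing on `[R*, ∞)`, so `R*` is the unique global maximizer on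
`(0, ∞)`; moreover `(ln 2 · R*) e^{ln 2 · R*} = γ/(A(γ+1))`, i.e.
`R* = (1/ln 2) W₀(γ/(A(γ+1)))` with `W₀` the principal Lambert W branch. -/
theorem secrecy_rate_objective_quasiconcave (A γ : ℝ) (hA : 0 < A) (hγ : 0 < γ) :
    ∃ Rstar : ℝ, 0 < Rstar ∧
      (A * (γ + 1) / γ) * Real.log 2 * (2 : ℝ) ^ Rstar * Rstar = 1 ∧
      (∀ R : ℝ, 0 < R → (A * (γ + 1) / γ) * Real.log 2 * (2 : ℝ) ^ R * R = 1 →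
        R = Rstar) ∧
      StrictMonoOn (fun R : ℝ => R * Real.exp (-A * ((γ + 1) * (2 : ℝ) ^ R - 1) / γ))
        (Set.Ioc 0 Rstar) ∧
      StrictAntiOn (fun R : ℝ => R * Real.exp (-A * ((γ + 1) * (2 : ℝ) ^ R - 1) / γ))
        (Set.Ici Rstar) ∧
      (∀ R : ℝ, 0 < R → R ≠ Rstar →
        R * Real.exp (-A * ((γ + 1) * (2 : ℝ) ^ R - 1) / γ) <
          Rstar * Real.exp (-A * ((γ + 1) * (2 : ℝ) ^ Rstar - 1) / γ)) ∧
      (Real.log 2 * Rstar) * Real.exp (Real.log 2 * Rstar) = γ / (A * (γ + 1)) := by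
  have ha : 0 < A * (γ + 1) / γ := by positivity
  have hf : (fun R : ℝ => R * exp (-A * ((γ + 1) * (2 : ℝ) ^ R - 1) / γ)) =
      fun R => R * exp (-(A * (γ + 1) / γ * 2 ^ R - A / γ)) := by
    funext R
    congr 2
    ring
  obtain ⟨R₀, hR₀pos, hR₀⟩ :=
    exists_pos_mul_rpow_mul_eq_one (mul_pos ha (log_pos one_lt_two)) one_lt_two
  have hmono := strictMonoOn_mul_exp_neg_rpow (d := A / γ) ha one_lt_two hR₀
  have hanti := strictAntiOn_mul_exp_neg_rpow (d := A / γ) ha one_lt_two hR₀pos hR₀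
  rw [← hf] at hmono hanti
  refine ⟨R₀, hR₀pos, hR₀, fun R hR hR1 => ?_, hmono, hanti,
    fun R hR hne => lt_of_strictMonoOn_Ioc_of_strictAntiOn_Ici hmono hanti hR hR₀pos hne, ?_⟩
  · exact (strictMonoOn_mul_rpow_mul (mul_pos ha (log_pos one_lt_two)) one_lt_two).injOn
      hR.le hR₀pos.le (hR1.trans hR₀.symm)
  · rw [log_mul_mul_exp_eq_inv two_pos hR₀, inv_div]
end
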